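/- arXiv:1204.1240 — 8 statements merged into one kernel-verified Lean document; each statement's English description precedes it below -/
import Mathlib

section
/- For any constants Q > 0 and T > 0, the function g(ρ) = (2^{Q/((1-ρ)T)} - 1)·(1-ρ) is strictly increasing on the interval [0, 1); in particular, g attains its minimum over [0,1) uniquely at ρ = 0. -/
open Real Set

/-!
Put `x = Q / ((1 - ρ) T)`, which increases with `ρ` on `[0, 1)`. Then
`g(ρ) = (Q / T) · (2 ^ x - 1) / x`, and `(2 ^ x - 1) / x` is the slope of the secant of the
strictly convex function `t ↦ 2 ^ t` between `0` and `x`, hence strictly increasing in `x`.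
-/

theorem strictConvexOn_rpow_left {b : ℝ} (hb : 1 < b) :
    StrictConvexOn ℝ univ fun x : ℝ => b ^ x := by
  refine ⟨convex_univ, fun x _ y _ hxy a c ha hc hac => ?_⟩
  have hlog : 0 < log b := log_pos hb
  have hne : log b * x ≠ log b * y := by
    simpa only [ne_eq, mul_right_inj' hlog.ne'] using hxy
  simpa only [rpow_def_of_pos (zero_lt_one.trans hb), smul_eq_mul, mul_add, mul_left_comm]
    using strictConvexOn_exp.2 (mem_univ _) (mem_univ _) hne ha hc hac

theorem strictMonoOn_rpow_sub_one_div {b : ℝ} (hb : 1 < b) :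
    StrictMonoOn (fun x : ℝ => (b ^ x - 1) / x) (Ioi 0) := by
  intro x hx y hy hxy
  simpa using (strictConvexOn_rpow_left hb).secant_strict_mono (mem_univ 0) (mem_univ x)
    (mem_univ y) (ne_of_gt hx) (ne_of_gt hy) hxy

theorem strictMonoOn_div_one_sub_mul {Q T : ℝ} (hQ : 0 < Q) (hT : 0 < T) :
    StrictMonoOn (fun ρ : ℝ => Q / ((1 - ρ) * T)) (Iio 1) := by
  intro ρ₁ _ ρ₂ h₂ hlt
  have h₂' : 0 < 1 - ρ₂ := sub_pos.2 h₂
  exact div_lt_div_of_pos_left hQ (by positivity) (by gcongr)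

theorem strictMonoOn_rpow_div_one_sub_mul_sub_one_mul {b Q T : ℝ} (hb : 1 < b) (hQ : 0 < Q)
    (hT : 0 < T) :
    StrictMonoOn (fun ρ : ℝ => (b ^ (Q / ((1 - ρ) * T)) - 1) * (1 - ρ)) (Iio 1) := by
  have hslope : StrictMonoOn (fun ρ : ℝ => Q / T * ((b ^ (Q / ((1 - ρ) * T)) - 1) /
      (Q / ((1 - ρ) * T)))) (Iio 1) := by
    refine fun ρ₁ h₁ ρ₂ h₂ hlt => mul_lt_mul_of_pos_left ?_ (div_pos hQ hT)
    refine (strictMonoOn_rpow_sub_one_div hb).comp (strictMonoOn_div_one_sub_mul hQ hT)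
      (fun ρ hρ => ?_) h₁ h₂ hlt
    have : 0 < 1 - ρ := sub_pos.2 hρ
    exact mem_Ioi.2 (by positivity)
  refine hslope.congr fun ρ hρ => ?_
  have : 1 - ρ ≠ 0 := (sub_pos.2 hρ).ne'
  field_simp

/-- For any constants `Q > 0` and `T > 0`, the threshold function
`g(ρ) = (2^{Q/((1-ρ)T)} - 1)·(1-ρ)` of the ideal-system (η = 1, P_c = 0)
save-then-transmit protocol is strictly increasing on `[0, 1)`; in particular,
`g` attains its minimum over `[0, 1)` uniquely at `ρ = 0`. -/
theorem ideal_threshold_strictMonoOn_and_min_at_zero (Q T : ℝ) (hQ : 0 < Q) (hT : 0 < T) :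
    StrictMonoOn (fun ρ : ℝ => ((2 : ℝ) ^ (Q / ((1 - ρ) * T)) - 1) * (1 - ρ))
      (Set.Ico (0 : ℝ) 1) ∧
    ∀ ρ ∈ Set.Ico (0 : ℝ) 1, ρ ≠ 0 →
      ((2 : ℝ) ^ (Q / ((1 - (0 : ℝ)) * T)) - 1) * (1 - (0 : ℝ)) <
        ((2 : ℝ) ^ (Q / ((1 - ρ) * T)) - 1) * (1 - ρ) := by
  have mono : StrictMonoOn (fun ρ : ℝ => ((2 : ℝ) ^ (Q / ((1 - ρ) * T)) - 1) * (1 - ρ))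
      (Ico 0 1) :=
    (strictMonoOn_rpow_div_one_sub_mul_sub_one_mul one_lt_two hQ hT).mono Ico_subset_Iio_self
  exact ⟨mono, fun ρ hρ hne => mono (left_mem_Ico.2 one_pos) hρ (hρ.1.lt_of_ne' hne)⟩
end

section
/- Let X and Γ be nonnegative real-valued random variables on a probability space, and let Q > 0, T > 0. Then for every ρ ∈ [0, 1), Pr[ X·Γ < 2^{Q/T} - 1 ] ≤ Pr[ X·Γ < (2^{Q/((1-ρ)T)} - 1)(1-ρ) ]. In other words, in the ideal system (battery efficiency η = 1, circuit power P_c = 0) the outage probability of the save-then-transmit protocol is minimized by the save-ratio ρ = 0, and the minimum outage probability equals Pr[ XΓ < 2^{Q/T} - 1 ]. -/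
open MeasureTheory Real Set

/-- In the ideal system (battery efficiency η = 1, circuit power P_c = 0), for
nonnegative random variables `X` (energy harvesting rate) and `Γ` (channel
power-to-noise ratio), the outage probability of the save-then-transmit protocol
with save-ratio `ρ ∈ [0,1)` is minimized at `ρ = 0`:
`Pr[XΓ < 2^{Q/T} - 1] ≤ Pr[XΓ < (2^{Q/((1-ρ)T)} - 1)(1-ρ)]`. -/
theorem ideal_outage_minimized_at_zero_save_ratio
    {Ω : Type*} [MeasurableSpace Ω] (μ : Measure Ω) [IsProbabilityMeasure μ]
    (X Γ : Ω → ℝ) (hX : ∀ ω, 0 ≤ X ω) (hΓ : ∀ ω, 0 ≤ Γ ω)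
    (Q T : ℝ) (hQ : 0 < Q) (hT : 0 < T) (ρ : ℝ) (hρ : ρ ∈ Set.Ico (0 : ℝ) 1) :
    μ {ω | X ω * Γ ω < (2 : ℝ) ^ (Q / T) - 1} ≤
      μ {ω | X ω * Γ ω < ((2 : ℝ) ^ (Q / ((1 - ρ) * T)) - 1) * (1 - ρ)} := by
  obtain ⟨hρ0, hρ1⟩ := hρ
  set s : ℝ := 1 - ρ with hs
  have hs0 : 0 < s := by simp [hs]; linarith
  have hs1 : s ≤ 1 := by simp [hs]; linarith
  set a : ℝ := Q / T with ha
  have ha0 : 0 < a := div_pos hQ hT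
  have hexp : Q / ((1 - ρ) * T) = a / s := by
    rw [ha, hs, mul_comm, ← div_div]
  -- key inequality: 2^a - 1 ≤ (2^(a/s) - 1) * s
  have key : (2 : ℝ) ^ a - 1 ≤ ((2 : ℝ) ^ (a / s) - 1) * s := by
    have hcx := convexOn_exp.2 (mem_univ (0 : ℝ))
      (mem_univ (Real.log 2 * (a / s))) (by linarith : (0:ℝ) ≤ 1 - s) hs0.le
      (by ring)
    simp only [smul_eq_mul, mul_zero, zero_add, Real.exp_zero, mul_one] at hcx
    have hsm : s * (Real.log 2 * (a / s)) = Real.log 2 * a := by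
      field_simp
    rw [hsm] at hcx
    have h1 : (2 : ℝ) ^ a = Real.exp (Real.log 2 * a) :=
      Real.rpow_def_of_pos (by norm_num) a
    have h2 : (2 : ℝ) ^ (a / s) = Real.exp (Real.log 2 * (a / s)) :=
      Real.rpow_def_of_pos (by norm_num) (a / s)
    rw [h1, h2]
    nlinarith [hcx]
  apply measure_mono
  intro ω hω
  simp only [Set.mem_setOf_eq] at *
  calc X ω * Γ ω < (2 : ℝ) ^ (Q / T) - 1 := hω
    _ ≤ ((2 : ℝ) ^ (Q / ((1 - ρ) * T)) - 1) * (1 - ρ) := by rw [hexp]; exact key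
end

section
/- Fix Q > 0, T > 0 and η ∈ [0, 1]. The function u(ρ) = 2^{Q/((1-ρ)T)}·(ln 2)·(Q/((1-ρ)T))·(ρ + η(1-ρ)) − 2^{Q/((1-ρ)T)} + 1 is strictly increasing in ρ on the interval [0, 1). Moreover, for each fixed ρ ∈ [0,1), u is strictly increasing in η whenever ρ < 1. -/
open Real Set

lemma u_hasDerivAt (Q T η : ℝ) (hT : 0 < T) {ρ : ℝ} (hρ : ρ < 1) :
    HasDerivAt
      (fun ρ : ℝ => (2 : ℝ) ^ (Q / ((1 - ρ) * T)) * Real.log 2 * (Q / ((1 - ρ) * T)) *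
          (ρ + η * (1 - ρ)) - (2 : ℝ) ^ (Q / ((1 - ρ) * T)) + 1)
      ((((2 : ℝ) ^ (Q / ((1 - ρ) * T)) * Real.log 2 *
            ((0 * ((1 - ρ) * T) - Q * ((0 - 1) * T)) / ((1 - ρ) * T) ^ 2) * Real.log 2) *
            (Q / ((1 - ρ) * T)) +
          ((2 : ℝ) ^ (Q / ((1 - ρ) * T)) * Real.log 2) *
            ((0 * ((1 - ρ) * T) - Q * ((0 - 1) * T)) / ((1 - ρ) * T) ^ 2)) *
          (ρ + η * (1 - ρ)) +
        ((2 : ℝ) ^ (Q / ((1 - ρ) * T)) * Real.log 2 * (Q / ((1 - ρ) * T))) * (1 + η * (0 - 1)) -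
        (2 : ℝ) ^ (Q / ((1 - ρ) * T)) * Real.log 2 *
          ((0 * ((1 - ρ) * T) - Q * ((0 - 1) * T)) / ((1 - ρ) * T) ^ 2)) ρ := by
  have hD : ((1 - ρ) * T) ≠ 0 := by
    have : 0 < (1 - ρ) * T := mul_pos (by linarith) hT
    exact ne_of_gt this
  have hD' : HasDerivAt (fun ρ : ℝ => (1 - ρ) * T) ((0 - 1) * T) ρ :=
    ((hasDerivAt_const ρ (1 : ℝ)).sub (hasDerivAt_id ρ)).mul_const T
  have hx : HasDerivAt (fun ρ : ℝ => Q / ((1 - ρ) * T))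
      ((0 * ((1 - ρ) * T) - Q * ((0 - 1) * T)) / ((1 - ρ) * T) ^ 2) ρ :=
    (hasDerivAt_const ρ Q).div hD' hD
  have hE : HasDerivAt (fun ρ : ℝ => (2 : ℝ) ^ (Q / ((1 - ρ) * T)))
      ((2 : ℝ) ^ (Q / ((1 - ρ) * T)) * Real.log 2 *
        ((0 * ((1 - ρ) * T) - Q * ((0 - 1) * T)) / ((1 - ρ) * T) ^ 2)) ρ := by
    have := ((Real.hasStrictDerivAt_const_rpow (by norm_num : (0:ℝ) < 2)
      (Q / ((1 - ρ) * T))).hasDerivAt).comp ρ hx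
    exact this
  have hs : HasDerivAt (fun ρ : ℝ => ρ + η * (1 - ρ)) (1 + η * (0 - 1)) ρ :=
    (hasDerivAt_id ρ).add (((hasDerivAt_const ρ (1:ℝ)).sub (hasDerivAt_id ρ)).const_mul η)
  exact (((hE.mul_const (Real.log 2)).mul hx).mul hs).sub hE |>.add_const 1

/-- Fix `Q > 0`, `T > 0` and `η ∈ [0,1]`. The function
`u(ρ) = 2^{Q/((1-ρ)T)}·(ln 2)·(Q/((1-ρ)T))·(ρ + η(1-ρ)) − 2^{Q/((1-ρ)T)} + 1`
is strictly increasing in `ρ` on `[0, 1)`; moreover, for each fixed `ρ ∈ [0,1)`,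
it is strictly increasing in `η` on `[0,1]`. -/
theorem u_strictMono_in_rho_and_eta (Q T : ℝ) (hQ : 0 < Q) (hT : 0 < T) :
    (∀ η ∈ Set.Icc (0 : ℝ) 1,
      StrictMonoOn
        (fun ρ : ℝ => (2 : ℝ) ^ (Q / ((1 - ρ) * T)) * Real.log 2 * (Q / ((1 - ρ) * T)) *
            (ρ + η * (1 - ρ)) - (2 : ℝ) ^ (Q / ((1 - ρ) * T)) + 1)
        (Set.Ico (0 : ℝ) 1)) ∧
    (∀ ρ ∈ Set.Ico (0 : ℝ) 1,
      StrictMonoOn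
        (fun η : ℝ => (2 : ℝ) ^ (Q / ((1 - ρ) * T)) * Real.log 2 * (Q / ((1 - ρ) * T)) *
            (ρ + η * (1 - ρ)) - (2 : ℝ) ^ (Q / ((1 - ρ) * T)) + 1)
        (Set.Icc (0 : ℝ) 1)) := by
  have hl2 : 0 < Real.log 2 := Real.log_pos (by norm_num)
  constructor
  · intro η hη
    obtain ⟨hη0, hη1⟩ := hη
    apply strictMonoOn_of_deriv_pos (convex_Ico 0 1)
    · intro ρ hρ
      exact ((u_hasDerivAt Q T η hT hρ.2).continuousAt).continuousWithinAt
    · intro ρ hρ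
      rw [interior_Ico] at hρ
      obtain ⟨hρ0, hρ1⟩ := hρ
      have h1ρ : 0 < 1 - ρ := by linarith
      have hD : 0 < (1 - ρ) * T := mul_pos h1ρ hT
      rw [(u_hasDerivAt Q T η hT hρ1).deriv]
      have hEpos : 0 < (2 : ℝ) ^ (Q / ((1 - ρ) * T)) := Real.rpow_pos_of_pos (by norm_num) _
      have hspos : 0 < ρ + η * (1 - ρ) := by nlinarith
      have key : (((2 : ℝ) ^ (Q / ((1 - ρ) * T)) * Real.log 2 *
            ((0 * ((1 - ρ) * T) - Q * ((0 - 1) * T)) / ((1 - ρ) * T) ^ 2) * Real.log 2) *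
            (Q / ((1 - ρ) * T)) +
          ((2 : ℝ) ^ (Q / ((1 - ρ) * T)) * Real.log 2) *
            ((0 * ((1 - ρ) * T) - Q * ((0 - 1) * T)) / ((1 - ρ) * T) ^ 2)) *
          (ρ + η * (1 - ρ)) +
        ((2 : ℝ) ^ (Q / ((1 - ρ) * T)) * Real.log 2 * (Q / ((1 - ρ) * T))) * (1 + η * (0 - 1)) -
        (2 : ℝ) ^ (Q / ((1 - ρ) * T)) * Real.log 2 *
          ((0 * ((1 - ρ) * T) - Q * ((0 - 1) * T)) / ((1 - ρ) * T) ^ 2)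
          = (2 : ℝ) ^ (Q / ((1 - ρ) * T)) * (Real.log 2) ^ 2 * (Q / ((1 - ρ) * T)) ^ 2 *
            (ρ + η * (1 - ρ)) / (1 - ρ) := by
        field_simp
        ring
      rw [key]
      have hxpos : 0 < Q / ((1 - ρ) * T) := div_pos hQ hD
      positivity
  · intro ρ hρ
    obtain ⟨hρ0, hρ1⟩ := hρ
    have h1ρ : 0 < 1 - ρ := by linarith
    have hD : 0 < (1 - ρ) * T := mul_pos h1ρ hT
    have hEpos : 0 < (2 : ℝ) ^ (Q / ((1 - ρ) * T)) := Real.rpow_pos_of_pos (by norm_num) _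
    have hxpos : 0 < Q / ((1 - ρ) * T) := div_pos hQ hD
    intro a _ b _ hab
    simp only
    have hK : 0 < (2 : ℝ) ^ (Q / ((1 - ρ) * T)) * Real.log 2 * (Q / ((1 - ρ) * T)) :=
      mul_pos (mul_pos hEpos (Real.log_pos (by norm_num))) hxpos
    nlinarith [mul_pos hK (mul_pos h1ρ (sub_pos.2 hab))]
end

section
/- Fix Q > 0 and T > 0, and define the threshold η_th = (2^{Q/T} − 1)/(2^{Q/T}·(ln 2)·(Q/T)). If η ∈ [η_th, 1], then the function g_η(ρ) = (2^{Q/((1-ρ)T)} − 1)/(ρ/(1-ρ) + η) satisfies g_η(0) ≤ g_η(ρ) for all ρ ∈ [0, 1); i.e., the optimal save-ratio for outage minimization with zero circuit power is ρ* = 0. -/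
open Real Set

/-! Put `a = Q/T` and `s = 1/(1-ρ) ≥ 1`, so that `g_η(ρ) = (2^{as} - 1)/(s - 1 + η)`.
Convexity of `s ↦ 2^{as}` gives the tangent bound `2^{as} ≥ 2^a (1 + (s-1) a ln 2)` at `s = 1`,
and `η ≥ η_th` says exactly that `2^a - 1 ≤ η · 2^a a ln 2`; together they give
`(2^a - 1)(s - 1 + η) ≤ η (2^{as} - 1)`, i.e. `g_η(0) ≤ g_η(ρ)`. -/

theorem Real.rpow_mul_one_add_mul_log_le_rpow {b : ℝ} (hb : 0 < b) (x y : ℝ) :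
    b ^ x * (1 + (y - x) * log b) ≤ b ^ y := by
  have h_exp : b ^ (y - x) = exp ((y - x) * log b) := by
    rw [rpow_def_of_pos hb, mul_comm]
  calc b ^ x * (1 + (y - x) * log b)
      ≤ b ^ x * b ^ (y - x) := by
        gcongr
        rw [h_exp, add_comm]
        exact add_one_le_exp _
    _ = b ^ y := by rw [← rpow_add hb, add_sub_cancel]

theorem rpow_sub_one_div_le_rpow_mul_sub_one_div {b a η s : ℝ} (hb : 0 < b) (hη : 0 < η)
    (hs : 1 ≤ s) (h_thr : b ^ a - 1 ≤ η * (b ^ a * log b * a)) :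
    (b ^ a - 1) / η ≤ (b ^ (a * s) - 1) / (s - 1 + η) := by
  have h_tangent := Real.rpow_mul_one_add_mul_log_le_rpow hb a (a * s)
  have h_scaled : (s - 1) * (b ^ a - 1) ≤ (s - 1) * (η * (b ^ a * log b * a)) :=
    mul_le_mul_of_nonneg_left h_thr (sub_nonneg.2 hs)
  rw [div_le_div_iff₀ hη (by linarith)]
  nlinarith [mul_le_mul_of_nonneg_left h_tangent hη.le]

theorem optimal_save_ratio_zero_above_threshold_general (Q T η : ℝ) (hQ : 0 < Q) (hT : 0 < T)
    (hη_lo : ((2 : ℝ) ^ (Q / T) - 1) / ((2 : ℝ) ^ (Q / T) * Real.log 2 * (Q / T)) ≤ η) :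
    ∀ ρ ∈ Set.Ico (0 : ℝ) 1,
      ((2 : ℝ) ^ (Q / ((1 - (0 : ℝ)) * T)) - 1) / ((0 : ℝ) / (1 - (0 : ℝ)) + η) ≤
        ((2 : ℝ) ^ (Q / ((1 - ρ) * T)) - 1) / (ρ / (1 - ρ) + η) := by
  rintro ρ ⟨hρ0, hρ1⟩
  have ha : 0 < Q / T := div_pos hQ hT
  have h_den : 0 < (2 : ℝ) ^ (Q / T) * log 2 * (Q / T) := by
    have := log_pos one_lt_two
    positivity
  have h_num : 0 < (2 : ℝ) ^ (Q / T) - 1 := sub_pos.2 (one_lt_rpow one_lt_two ha)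
  have hη : 0 < η := (div_pos h_num h_den).trans_le hη_lo
  have hu : 0 < 1 - ρ := sub_pos.2 hρ1
  have hs : 1 ≤ 1 / (1 - ρ) := by rw [le_div_iff₀ hu]; linarith
  have h_exp : Q / ((1 - ρ) * T) = Q / T * (1 / (1 - ρ)) := by field_simp
  have h_ratio : ρ / (1 - ρ) = 1 / (1 - ρ) - 1 := by field_simp; ring
  simpa [h_exp, h_ratio] using
    rpow_sub_one_div_le_rpow_mul_sub_one_div two_pos hη hs ((div_le_iff₀ h_den).1 hη_lo)

/-- Fix `Q > 0` and `T > 0`, and let `η_th = (2^{Q/T} − 1)/(2^{Q/T}·(ln 2)·(Q/T))`.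
If the battery efficiency satisfies `η ∈ [η_th, 1]`, then the outage threshold
`g_η(ρ) = (2^{Q/((1-ρ)T)} − 1)/(ρ/(1-ρ) + η)` satisfies `g_η(0) ≤ g_η(ρ)` for all
`ρ ∈ [0, 1)`; i.e., the optimal save-ratio with zero circuit power is `ρ* = 0`. -/
theorem optimal_save_ratio_zero_above_threshold (Q T η : ℝ) (hQ : 0 < Q) (hT : 0 < T)
    (hη_lo : ((2 : ℝ) ^ (Q / T) - 1) / ((2 : ℝ) ^ (Q / T) * Real.log 2 * (Q / T)) ≤ η)
    (hη_hi : η ≤ 1) :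
    ∀ ρ ∈ Set.Ico (0 : ℝ) 1,
      ((2 : ℝ) ^ (Q / ((1 - (0 : ℝ)) * T)) - 1) / ((0 : ℝ) / (1 - (0 : ℝ)) + η) ≤
        ((2 : ℝ) ^ (Q / ((1 - ρ) * T)) - 1) / (ρ / (1 - ρ) + η) :=
  optimal_save_ratio_zero_above_threshold_general Q T η hQ hT hη_lo
end

section
/- Fix Q > 0 and T > 0, and define the threshold η_th = (2^{Q/T} − 1)/(2^{Q/T}·(ln 2)·(Q/T)). If η ∈ [0, η_th), then there exists a unique ρ_c ∈ (0, 1) such that the function g_η(ρ) = (2^{Q/((1-ρ)T)} − 1)/(ρ/(1-ρ) + η) attains its minimum over [0, 1) at ρ_c; in particular g_η(ρ_c) < g_η(0), so the optimal save-ratio is strictly positive. -/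
/-!
Substituting `x = 1/(1-ρ) ∈ [1, ∞)` and `c = (ln 2)·Q/T` turns `g_η` into
`(exp (c x) - 1)/(x - 1 + η)`. Below the threshold its derivative is negative at `x = 1` and
it becomes positive for large `x`, so by the intermediate value theorem there is a stationary
point `s > 1`. At a stationary point the tangent line of the convex function `exp (c x)` gives
`g_η(x) > g_η(s)` for every `x ≠ s`, which yields existence and uniqueness of the minimiser.
-/

open Real Set

lemma exists_stationary_of_lt_threshold {c η : ℝ} (hc : 0 < c) (hη : 0 ≤ η)
    (hthreshold : c * exp c * η < exp c - 1) :
    ∃ s, 1 < s ∧ c * exp (c * s) * (s - 1 + η) = exp (c * s) - 1 := by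
  set φ : ℝ → ℝ := fun x => c * exp (c * x) * (x - 1 + η) - (exp (c * x) - 1)
  have hφ_one : φ 1 < 0 := by simp only [φ, mul_one, sub_self, zero_add]; linarith
  have hφ_large : 0 < φ (1 + 1 / c) := by
    have hexp := exp_pos (c * (1 + 1 / c))
    have hlin : c * (1 + 1 / c - 1 + η) = 1 + c * η := by field_simp; ring
    simp only [φ]
    nlinarith [mul_nonneg hexp.le (mul_nonneg hc.le hη)]
  have hφ_cont : ContinuousOn φ (Icc 1 (1 + 1 / c)) := by fun_prop
  obtain ⟨s, ⟨hs_one, -⟩, hs⟩ := intermediate_value_Ioo (by simp [hc.le]) hφ_cont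
    ⟨hφ_one, hφ_large⟩
  exact ⟨s, hs_one, sub_eq_zero.mp hs⟩

lemma exp_sub_one_mul_lt_of_stationary {c η s x : ℝ} (hc : c ≠ 0) (hs : 0 < s - 1 + η)
    (hstat : c * exp (c * s) * (s - 1 + η) = exp (c * s) - 1) (hx : x ≠ s) :
    (exp (c * s) - 1) * (x - 1 + η) < (exp (c * x) - 1) * (s - 1 + η) := by
  have htangent : exp (c * s) * (c * (x - s) + 1) < exp (c * x) := by
    have := add_one_lt_exp (mul_ne_zero hc (sub_ne_zero.mpr hx))
    calc exp (c * s) * (c * (x - s) + 1) < exp (c * s) * exp (c * (x - s)) :=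
          mul_lt_mul_of_pos_left this (exp_pos _)
      _ = exp (c * x) := by rw [← exp_add]; congr 1; ring
  have hslope : (exp (c * s) - 1) * (x - s) = c * exp (c * s) * (s - 1 + η) * (x - s) := by
    rw [hstat]
  linarith [mul_lt_mul_of_pos_right htangent hs]

lemma two_rpow_div_eq_exp (Q T ρ : ℝ) :
    (2 : ℝ) ^ (Q / ((1 - ρ) * T)) = exp (log 2 * (Q / T) * (1 - ρ)⁻¹) := by
  rw [rpow_def_of_pos two_pos]
  congr 1
  simp only [div_eq_mul_inv, mul_inv]
  ring

lemma div_one_sub_add_eq {ρ : ℝ} (hρ : ρ ≠ 1) (η : ℝ) :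
    ρ / (1 - ρ) + η = (1 - ρ)⁻¹ - 1 + η := by
  field_simp [sub_ne_zero.mpr hρ.symm]
  ring

/-- Fix `Q > 0`, `T > 0` and let `η_th = (2^{Q/T} − 1)/(2^{Q/T}·(ln 2)·(Q/T))`.
If the battery efficiency satisfies `0 ≤ η < η_th`, then there is a unique
`ρ_c ∈ (0,1)` at which `g_η(ρ) = (2^{Q/((1-ρ)T)} − 1)/(ρ/(1-ρ) + η)` attains its
minimum over `[0,1)`; in particular `g_η(ρ_c) < g_η(0)`, so the optimal save-ratio
is strictly positive.  (The comparisons `g_η(ρ_c) < g_η(ρ)` are stated in the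
equivalent cross-multiplied form `(2^{Q/((1-ρ_c)T)} − 1)(ρ/(1-ρ) + η) <
(2^{Q/((1-ρ)T)} − 1)(ρ_c/(1-ρ_c) + η)`, which is valid since the denominators
`ρ/(1-ρ) + η` are positive — interpreting `g_η(0) = +∞` when `η = 0`.) -/
theorem optimal_save_ratio_positive_below_threshold (Q T η : ℝ) (hQ : 0 < Q) (hT : 0 < T)
    (hη_lo : 0 ≤ η)
    (hη_hi : η < ((2 : ℝ) ^ (Q / T) - 1) / ((2 : ℝ) ^ (Q / T) * Real.log 2 * (Q / T))) :
    ∃ ρc : ℝ, ρc ∈ Set.Ioo (0 : ℝ) 1 ∧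
      (∀ ρ ∈ Set.Ico (0 : ℝ) 1, ρ ≠ ρc →
        ((2 : ℝ) ^ (Q / ((1 - ρc) * T)) - 1) * (ρ / (1 - ρ) + η) <
          ((2 : ℝ) ^ (Q / ((1 - ρ) * T)) - 1) * (ρc / (1 - ρc) + η)) ∧
      (((2 : ℝ) ^ (Q / ((1 - ρc) * T)) - 1) * ((0 : ℝ) / (1 - (0 : ℝ)) + η) <
          ((2 : ℝ) ^ (Q / ((1 - (0 : ℝ)) * T)) - 1) * (ρc / (1 - ρc) + η)) ∧
      (∀ ρc' ∈ Set.Ioo (0 : ℝ) 1,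
        (∀ ρ ∈ Set.Ico (0 : ℝ) 1, ρ ≠ ρc' →
          ((2 : ℝ) ^ (Q / ((1 - ρc') * T)) - 1) * (ρ / (1 - ρ) + η) <
            ((2 : ℝ) ^ (Q / ((1 - ρ) * T)) - 1) * (ρc' / (1 - ρc') + η)) →
        ρc' = ρc) := by
  set c := log 2 * (Q / T)
  have hc : 0 < c := mul_pos (log_pos one_lt_two) (div_pos hQ hT)
  have hthreshold : c * exp c * η < exp c - 1 := by
    rw [rpow_def_of_pos two_pos, lt_div_iff₀ (by positivity)] at hη_hi
    linarith
  obtain ⟨s, hs_one, hstat⟩ := exists_stationary_of_lt_threshold hc hη_lo hthreshold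
  have hs_pos : 0 < s := by linarith
  have hρc : 1 - s⁻¹ ∈ Ioo (0 : ℝ) 1 :=
    ⟨sub_pos.mpr (inv_lt_one_of_one_lt₀ hs_one), sub_lt_self 1 (inv_pos.mpr hs_pos)⟩
  have hmin : ∀ ρ ∈ Ico (0 : ℝ) 1, ρ ≠ 1 - s⁻¹ →
      ((2 : ℝ) ^ (Q / ((1 - (1 - s⁻¹)) * T)) - 1) * (ρ / (1 - ρ) + η) <
        ((2 : ℝ) ^ (Q / ((1 - ρ) * T)) - 1) * ((1 - s⁻¹) / (1 - (1 - s⁻¹)) + η) := by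
    intro ρ hρ hne
    rw [two_rpow_div_eq_exp, two_rpow_div_eq_exp, div_one_sub_add_eq hρ.2.ne,
      div_one_sub_add_eq hρc.2.ne, sub_sub_cancel, inv_inv]
    refine exp_sub_one_mul_lt_of_stationary hc.ne' (by linarith) hstat fun h => hne ?_
    rw [← h, inv_inv, sub_sub_cancel]
  refine ⟨1 - s⁻¹, hρc, hmin, hmin 0 ⟨le_rfl, one_pos⟩ hρc.1.ne, fun ρc' hρc' hmin' => ?_⟩
  by_contra hne
  linarith [hmin' _ (Ioo_subset_Ico_self hρc) (Ne.symm hne), hmin ρc' (Ioo_subset_Ico_self hρc') hne]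
end

section
/- Fix Q > 0, T > 0 and define u(ρ, η) = 2^{Q/((1-ρ)T)}·(ln 2)·(Q/((1-ρ)T))·(ρ + η(1-ρ)) − 2^{Q/((1-ρ)T)} + 1. If 0 ≤ η₁ < η₂ ≤ 1 and ρ₁, ρ₂ ∈ (0, 1) satisfy u(ρ₁, η₁) = 0 and u(ρ₂, η₂) = 0, then ρ₂ < ρ₁. Consequently, the optimal save-ratio ρ*(η, 0) for outage minimization with zero circuit power is a non-increasing function of the battery efficiency η on [0,1]. -/
open Real Set

lemma h_antitone : AntitoneOn (fun y : ℝ => (1 - Real.exp (-y)) / y) (Set.Ioi 0) := by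
  have key : ∀ y : ℝ, 0 < y → HasDerivAt (fun y : ℝ => (1 - Real.exp (-y)) / y)
      ((Real.exp (-y) * y - (1 - Real.exp (-y)) * 1) / y ^ 2) y := by
    intro y hy
    have h1 : HasDerivAt (fun y : ℝ => 1 - Real.exp (-y)) (Real.exp (-y)) y := by
      have := ((hasDerivAt_neg y).exp).const_sub 1
      simpa using this
    exact h1.div (hasDerivAt_id y) hy.ne'
  apply antitoneOn_of_deriv_nonpos (convex_Ioi 0)
  · exact ContinuousOn.div (by fun_prop) continuousOn_id (fun y hy => ne_of_gt hy)
  · intro y hy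
    rw [interior_Ioi] at hy
    exact (key y hy).differentiableAt.differentiableWithinAt
  · intro y hy
    rw [interior_Ioi] at hy
    rw [(key y hy).deriv]
    apply div_nonpos_of_nonpos_of_nonneg _ (sq_nonneg y)
    have h2 : Real.exp (-y) * Real.exp y = 1 := by rw [← Real.exp_add]; simp
    nlinarith [mul_le_mul_of_nonneg_left (Real.add_one_le_exp y) (Real.exp_pos (-y)).le]

/-- Fix `Q > 0`, `T > 0` and define
`u(ρ, η) = 2^{Q/((1-ρ)T)}·(ln 2)·(Q/((1-ρ)T))·(ρ + η(1-ρ)) − 2^{Q/((1-ρ)T)} + 1`.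
If `0 ≤ η₁ < η₂ ≤ 1` and `ρ₁, ρ₂ ∈ (0,1)` satisfy `u(ρ₁, η₁) = 0` and
`u(ρ₂, η₂) = 0`, then `ρ₂ < ρ₁`; hence the optimal save-ratio `ρ*(η, 0)` is a
non-increasing function of the battery efficiency `η` on `[0,1]`. -/
theorem optimal_save_ratio_nonincreasing_in_eta (Q T : ℝ) (hQ : 0 < Q) (hT : 0 < T)
    (η₁ η₂ ρ₁ ρ₂ : ℝ) (hη₁ : 0 ≤ η₁) (hη₁₂ : η₁ < η₂) (hη₂ : η₂ ≤ 1)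
    (hρ₁ : ρ₁ ∈ Set.Ioo (0 : ℝ) 1) (hρ₂ : ρ₂ ∈ Set.Ioo (0 : ℝ) 1)
    (hu₁ : (2 : ℝ) ^ (Q / ((1 - ρ₁) * T)) * Real.log 2 * (Q / ((1 - ρ₁) * T)) *
        (ρ₁ + η₁ * (1 - ρ₁)) - (2 : ℝ) ^ (Q / ((1 - ρ₁) * T)) + 1 = 0)
    (hu₂ : (2 : ℝ) ^ (Q / ((1 - ρ₂) * T)) * Real.log 2 * (Q / ((1 - ρ₂) * T)) *
        (ρ₂ + η₂ * (1 - ρ₂)) - (2 : ℝ) ^ (Q / ((1 - ρ₂) * T)) + 1 = 0) :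
    ρ₂ < ρ₁ := by
  obtain ⟨hρ₁0, hρ₁1⟩ := hρ₁
  obtain ⟨hρ₂0, hρ₂1⟩ := hρ₂
  set x₁ := Q / ((1 - ρ₁) * T) with hx₁def
  set x₂ := Q / ((1 - ρ₂) * T) with hx₂def
  have hx₁ : 0 < x₁ := div_pos hQ (mul_pos (by linarith) hT)
  have hx₂ : 0 < x₂ := div_pos hQ (mul_pos (by linarith) hT)
  have hlog2 : 0 < Real.log 2 := Real.log_pos (by norm_num)
  -- rewrite rpow as exp
  have hrpow : ∀ x : ℝ, (2 : ℝ) ^ x = Real.exp (x * Real.log 2) := by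
    intro x
    rw [Real.rpow_def_of_pos (by norm_num : (0:ℝ) < 2)]
    ring_nf
  set y₁ := x₁ * Real.log 2 with hy₁def
  set y₂ := x₂ * Real.log 2 with hy₂def
  have hy₁ : 0 < y₁ := mul_pos hx₁ hlog2
  have hy₂ : 0 < y₂ := mul_pos hx₂ hlog2
  have hexpneg : ∀ y : ℝ, Real.exp (-y) * Real.exp y = 1 := by
    intro y; rw [← Real.exp_add]; simp
  -- c_i = h(y_i)
  have hc₁ : ρ₁ + η₁ * (1 - ρ₁) = (1 - Real.exp (-y₁)) / y₁ := by
    rw [hrpow] at hu₁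
    have he := Real.exp_pos y₁
    have hne := hexpneg y₁
    rw [hy₁def] at he hne ⊢
    field_simp
    nlinarith [hu₁, he, hne]
  have hc₂ : ρ₂ + η₂ * (1 - ρ₂) = (1 - Real.exp (-y₂)) / y₂ := by
    rw [hrpow] at hu₂
    have he := Real.exp_pos y₂
    have hne := hexpneg y₂
    rw [hy₂def] at he hne ⊢
    field_simp
    nlinarith [hu₂, he, hne]
  by_contra hcon
  push_neg at hcon  -- ρ₁ ≤ ρ₂
  have hx12 : x₁ ≤ x₂ := by
    rw [hx₁def, hx₂def]
    apply div_le_div_of_nonneg_left hQ.le (mul_pos (by linarith) hT)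
    nlinarith
  have hy12 : y₁ ≤ y₂ := by
    rw [hy₁def, hy₂def]
    exact mul_le_mul_of_nonneg_right hx12 hlog2.le
  have hmono := h_antitone (Set.mem_Ioi.mpr hy₁) (Set.mem_Ioi.mpr hy₂) hy12
  simp only at hmono
  nlinarith [hmono, hc₁, hc₂]
end

section
/- Let E and F be independent exponentially distributed random variables, each with mean 1. Then lim_{t → 0⁺} Pr[ E·F < t ] / ( t · ln(1/t) ) = 1. -/
/-!
Conditioning on `E = x`, `Pr[EF < t] = ∫_{x > 0} (1 - e^{-t/x}) e^{-x} dx`. For `x ≤ t` the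
integrand is at most `1`, for `x ≥ 1` at most `t e^{-x}`, and on `(t, 1)` it is
`t/x + O(t + t²/x²)`, since `1 - e^{-u} = u + O(u²)` and `e^{-x} = 1 + O(x)`. Integrating,
`Pr[EF < t] = t ln(1/t) + O(t)`, and `t = o(t ln(1/t))`.
-/

open MeasureTheory ProbabilityTheory Real Set Filter Asymptotics Topology

lemma expMeasure_Iio {r : ℝ} (hr : 0 < r) {a : ℝ} (ha : 0 ≤ a) :
    expMeasure r (Iio a) = ENNReal.ofReal (1 - exp (-(r * a))) := by
  rw [expMeasure, gammaMeasure, withDensity_apply _ measurableSet_Iio,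
    setLIntegral_congr Iio_ae_eq_Iic]
  exact (lintegral_exponentialPDF_eq_antiDeriv hr a).trans (by rw [if_pos ha])

lemma lintegral_expMeasure {r : ℝ} {f : ℝ → ENNReal} (hf : Measurable f) :
    ∫⁻ x, f x ∂expMeasure r =
      ∫⁻ x in Ioi 0, ENNReal.ofReal (r * exp (-(r * x))) * f x := by
  have hpdf : Measurable (exponentialPDF r) := (measurable_exponentialPDFReal r).ennreal_ofReal
  change ∫⁻ x, f x ∂volume.withDensity (exponentialPDF r) = _
  rw [lintegral_withDensity_eq_lintegral_mul _ hpdf hf, setLIntegral_congr Ioi_ae_eq_Ici,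
    ← lintegral_indicator measurableSet_Ici]
  refine lintegral_congr fun x => ?_
  by_cases hx : 0 ≤ x
  · simp [indicator_of_mem (mem_Ici.2 hx), ← exponentialPDF_of_nonneg hx, exponentialPDF]
  · simp [indicator_of_notMem (show x ∉ Ici 0 from hx), exponentialPDF_of_neg (not_le.1 hx)]

lemma measurableSet_mul_lt (t : ℝ) : MeasurableSet {p : ℝ × ℝ | p.1 * p.2 < t} :=
  measurableSet_lt (measurable_fst.mul measurable_snd) measurable_const

lemma measure_mul_lt_eq_prod {Ω : Type*} [MeasurableSpace Ω] {μ : Measure Ω}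
    [IsFiniteMeasure μ] {E F : Ω → ℝ} (hE : Measurable E) (hF : Measurable F)
    (hindep : IndepFun E F μ) (t : ℝ) :
    μ {ω | E ω * F ω < t} = (μ.map E).prod (μ.map F) {p : ℝ × ℝ | p.1 * p.2 < t} := by
  rw [← hindep.map_prod_eq_prod_map_map hE.aemeasurable hF.aemeasurable,
    Measure.map_apply (hE.prodMk hF) (measurableSet_mul_lt t)]
  rfl

/-- `Pr[F < t / x]` times the density of `E` at `x`. -/
noncomputable def outageIntegrand (t x : ℝ) : ℝ := (1 - exp (-(t / x))) * exp (-x)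

section outageIntegrand

variable {t x : ℝ}

lemma outageIntegrand_nonneg (ht : 0 ≤ t) (hx : 0 ≤ x) : 0 ≤ outageIntegrand t x :=
  mul_nonneg (sub_nonneg.2 (exp_le_one_iff.2 (neg_nonpos.2 (div_nonneg ht hx)))) (exp_pos _).le

lemma outageIntegrand_le_exp_neg (t x : ℝ) : outageIntegrand t x ≤ exp (-x) :=
  mul_le_of_le_one_left (exp_pos _).le (sub_le_self _ (exp_pos _).le)

lemma outageIntegrand_le_div_mul_exp_neg (t x : ℝ) : outageIntegrand t x ≤ t / x * exp (-x) :=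
  mul_le_mul_of_nonneg_right (by linarith [add_one_le_exp (-(t / x))]) (exp_pos _).le

lemma div_sub_sub_le_outageIntegrand (ht : 0 < t) (htx : t ≤ x) :
    t / x - t - t ^ 2 / x ^ 2 ≤ outageIntegrand t x := by
  have hx : 0 < x := ht.trans_le htx
  set u := t / x with hu
  have hu0 : 0 ≤ u := div_nonneg ht.le hx.le
  have hu1 : u ≤ 1 := (div_le_one hx).2 htx
  have hexp_u : u - u ^ 2 ≤ 1 - exp (-u) := by
    have := (abs_le.1 (abs_exp_sub_one_sub_id_le (x := -u)
      (by rwa [abs_neg, abs_of_nonneg hu0]))).2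
    linarith [neg_sq u]
  have hexp_x : 1 - x ≤ exp (-x) := by linarith [add_one_le_exp (-x)]
  calc t / x - t - t ^ 2 / x ^ 2 ≤ (u - u ^ 2) * (1 - x) := by
        have : (u - u ^ 2) * (1 - x) = t / x - t - t ^ 2 / x ^ 2 + t ^ 2 / x := by
          rw [hu]; field_simp; ring
        rw [this]; linarith [div_nonneg (sq_nonneg t) hx.le]
    _ ≤ (u - u ^ 2) * exp (-x) := mul_le_mul_of_nonneg_left hexp_x (by nlinarith)
    _ ≤ outageIntegrand t x := mul_le_mul_of_nonneg_right hexp_u (exp_pos _).le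

lemma measurable_outageIntegrand (t : ℝ) : Measurable (outageIntegrand t) := by
  unfold outageIntegrand; fun_prop

lemma integrableOn_outageIntegrand (ht : 0 ≤ t) : IntegrableOn (outageIntegrand t) (Ioi 0) :=
  (integrableOn_exp_neg_Ioi 0).mono' (measurable_outageIntegrand t).aestronglyMeasurable
    ((ae_restrict_iff' measurableSet_Ioi).2 <| ae_of_all _ fun x (hx : 0 < x) => by
      simpa [abs_of_nonneg (outageIntegrand_nonneg ht hx.le)] using
        outageIntegrand_le_exp_neg t x)

lemma integral_outageIntegrand_nonneg (ht : 0 ≤ t) : 0 ≤ ∫ x in Ioi 0, outageIntegrand t x :=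
  setIntegral_nonneg measurableSet_Ioi fun x (hx : 0 < x) => outageIntegrand_nonneg ht hx.le

lemma integral_outageIntegrand_eq_add (ht : 0 ≤ t) :
    ∫ x in Ioi 0, outageIntegrand t x = (∫ x in 0..t, outageIntegrand t x)
      + (∫ x in t..1, outageIntegrand t x) + ∫ x in Ioi 1, outageIntegrand t x := by
  have hint {a : ℝ} (ha : 0 ≤ a) : IntegrableOn (outageIntegrand t) (Ioi a) :=
    (integrableOn_outageIntegrand ht).mono_set (Ioi_subset_Ioi ha)
  rw [add_assoc, intervalIntegral.integral_interval_add_Ioi (hint ht) (hint zero_le_one),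
    intervalIntegral.integral_interval_add_Ioi (hint le_rfl) (hint ht)]

lemma intervalIntegrable_outageIntegrand (ht : 0 ≤ t) {a b : ℝ} (ha : 0 ≤ a) (hb : 0 ≤ b) :
    IntervalIntegrable (outageIntegrand t) volume a b :=
  intervalIntegrable_iff.2 <| (integrableOn_outageIntegrand ht).mono_set fun _ hx =>
    (le_min ha hb).trans_lt hx.1

lemma integral_outageIntegrand_zero_self_le (ht : 0 ≤ t) :
    ∫ x in 0..t, outageIntegrand t x ≤ t := by
  calc ∫ x in 0..t, outageIntegrand t x ≤ ∫ _ in 0..t, (1 : ℝ) :=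
        intervalIntegral.integral_mono_on ht (intervalIntegrable_outageIntegrand ht le_rfl ht)
          intervalIntegrable_const fun x hx =>
            (outageIntegrand_le_exp_neg t x).trans (exp_le_one_iff.2 (neg_nonpos.2 hx.1))
    _ = t := by simp

lemma le_integral_outageIntegrand_self_one (ht : 0 < t) (ht1 : t ≤ 1) :
    t * log (1 / t) - 2 * t ≤ ∫ x in t..1, outageIntegrand t x := by
  have hne : ∀ x ∈ uIcc t 1, x ≠ 0 := fun x hx => (ht.trans_le (uIcc_of_le ht1 ▸ hx).1).ne'
  have hderiv : ∀ x ∈ uIcc t 1,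
      HasDerivAt (fun x => t * log x - t * x + t ^ 2 * x⁻¹) (t / x - t - t ^ 2 / x ^ 2) x := by
    intro x hx
    refine ((((hasDerivAt_log (hne x hx)).const_mul t).sub ((hasDerivAt_id x).const_mul t)).add
      ((hasDerivAt_inv (hne x hx)).const_mul (t ^ 2))).congr_deriv ?_
    ring
  have hcont : ContinuousOn (fun x => t / x - t - t ^ 2 / x ^ 2) (uIcc t 1) :=
    ((continuousOn_const.div continuousOn_id hne).sub continuousOn_const).sub
      (continuousOn_const.div (continuousOn_id.pow 2) fun x hx => pow_ne_zero 2 (hne x hx))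
  calc t * log (1 / t) - 2 * t ≤ t * log (1 / t) - 2 * t + 2 * t ^ 2 := by nlinarith
    _ = ∫ x in t..1, (t / x - t - t ^ 2 / x ^ 2) := by
        rw [intervalIntegral.integral_eq_sub_of_hasDerivAt hderiv hcont.intervalIntegrable,
          one_div, log_inv, log_one]
        field_simp; ring
    _ ≤ ∫ x in t..1, outageIntegrand t x :=
        intervalIntegral.integral_mono_on ht1 hcont.intervalIntegrable
          (intervalIntegrable_outageIntegrand ht.le ht.le zero_le_one)
          fun x hx => div_sub_sub_le_outageIntegrand ht hx.1

lemma integral_outageIntegrand_self_one_le (ht : 0 < t) (ht1 : t ≤ 1) :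
    ∫ x in t..1, outageIntegrand t x ≤ t * log (1 / t) := by
  have hne : ∀ x ∈ uIcc t 1, x ≠ 0 := fun x hx => (ht.trans_le (uIcc_of_le ht1 ▸ hx).1).ne'
  calc ∫ x in t..1, outageIntegrand t x ≤ ∫ x in t..1, t * x⁻¹ :=
        intervalIntegral.integral_mono_on ht1
          (intervalIntegrable_outageIntegrand ht.le ht.le zero_le_one)
          (continuousOn_const.mul (continuousOn_inv₀.mono hne)).intervalIntegrable
          fun x hx => (outageIntegrand_le_div_mul_exp_neg t x).trans <|
            mul_le_of_le_one_right (div_nonneg ht.le (ht.trans_le hx.1).le)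
              (exp_le_one_iff.2 (by linarith [hx.1]))
    _ = t * log (1 / t) := by
        rw [intervalIntegral.integral_const_mul, integral_inv_of_pos ht one_pos]

lemma setIntegral_outageIntegrand_Ioi_one_le (ht : 0 ≤ t) :
    ∫ x in Ioi 1, outageIntegrand t x ≤ t := by
  calc ∫ x in Ioi 1, outageIntegrand t x ≤ ∫ x in Ioi 1, t * exp (-x) :=
        setIntegral_mono_on
          ((integrableOn_outageIntegrand ht).mono_set (Ioi_subset_Ioi zero_le_one))
          ((integrableOn_exp_neg_Ioi 1).const_mul t) measurableSet_Ioi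
          fun x (hx : 1 < x) => (outageIntegrand_le_div_mul_exp_neg t x).trans <|
            mul_le_mul_of_nonneg_right (div_le_self ht hx.le) (exp_pos _).le
    _ = t * exp (-1) := by rw [integral_const_mul, integral_exp_neg_Ioi]
    _ ≤ t := mul_le_of_le_one_right ht (exp_le_one_iff.2 (by norm_num))

lemma abs_integral_outageIntegrand_sub_le (ht : 0 < t) (ht1 : t ≤ 1) :
    |(∫ x in Ioi 0, outageIntegrand t x) - t * log (1 / t)| ≤ 2 * t := by
  have h0 : 0 ≤ ∫ x in 0..t, outageIntegrand t x :=
    intervalIntegral.integral_nonneg ht.le fun x hx => outageIntegrand_nonneg ht.le hx.1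
  have h1 : 0 ≤ ∫ x in Ioi 1, outageIntegrand t x :=
    setIntegral_nonneg measurableSet_Ioi fun x (hx : 1 < x) =>
      outageIntegrand_nonneg ht.le (zero_le_one.trans hx.le)
  rw [integral_outageIntegrand_eq_add ht.le, abs_le]
  constructor <;> linarith [integral_outageIntegrand_zero_self_le ht.le,
    le_integral_outageIntegrand_self_one ht ht1, integral_outageIntegrand_self_one_le ht ht1,
    setIntegral_outageIntegrand_Ioi_one_le ht.le]

end outageIntegrand

lemma expMeasure_prod_mul_lt {t : ℝ} (ht : 0 ≤ t) :
    (expMeasure 1).prod (expMeasure 1) {p : ℝ × ℝ | p.1 * p.2 < t}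
      = ENNReal.ofReal (∫ x in Ioi 0, outageIntegrand t x) := by
  have := isProbabilityMeasure_expMeasure one_pos
  rw [ofReal_integral_eq_lintegral_ofReal (integrableOn_outageIntegrand ht)
      ((ae_restrict_iff' measurableSet_Ioi).2 <| ae_of_all _ fun x (hx : 0 < x) =>
        outageIntegrand_nonneg ht hx.le),
    Measure.prod_apply (measurableSet_mul_lt t),
    lintegral_expMeasure (measurable_measure_prodMk_left (measurableSet_mul_lt t))]
  refine setLIntegral_congr_fun measurableSet_Ioi fun x (hx : 0 < x) => ?_
  have hslice : Prod.mk x ⁻¹' {p : ℝ × ℝ | p.1 * p.2 < t} = Iio (t / x) := by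
    ext y; simp [lt_div_iff₀ hx, mul_comm]
  rw [hslice, expMeasure_Iio one_pos (div_nonneg ht hx.le), ← ENNReal.ofReal_mul (by positivity),
    outageIntegrand]
  simp only [one_mul, mul_one, mul_comm]

lemma tendsto_div_mul_log_one_div_of_isBigO {f : ℝ → ℝ}
    (hf : (fun t => f t - t * log (1 / t)) =O[𝓝[>] 0] id) :
    Tendsto (fun t => f t / (t * log (1 / t))) (𝓝[>] 0) (𝓝 1) := by
  have hlog : Tendsto (fun t : ℝ => log (1 / t)) (𝓝[>] 0) atTop := by
    simpa only [one_div, log_inv, Function.comp_def] using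
      tendsto_neg_atBot_atTop.comp tendsto_log_nhdsGT_zero
  have hid : (id : ℝ → ℝ) =o[𝓝[>] 0] fun t => t * log (1 / t) := by
    refine ((isBigO_refl id _).mul_isLittleO ?_).congr_left mul_one
    exact (isLittleO_one_left_iff ℝ).2 (tendsto_abs_atTop_atTop.comp hlog)
  have hpos : ∀ᶠ t in 𝓝[>] (0 : ℝ), t * log (1 / t) ≠ 0 := by
    filter_upwards [Ioo_mem_nhdsGT one_pos] with t ht
    exact (mul_pos ht.1 (log_pos (one_lt_one_div ht.1 ht.2))).ne'
  exact (isEquivalent_iff_tendsto_one hpos).1 (hf.trans_isLittleO hid)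

/-- Let `E` and `F` be independent exponentially distributed random variables,
each with mean 1.  Then `Pr[E·F < t] / (t·ln(1/t)) → 1` as `t → 0⁺`; i.e., the
minimum outage probability of the ideal save-then-transmit system decays like
`ln(γ̄)/γ̄` rather than `1/γ̄`. -/
theorem outage_prob_asymptotic {Ω : Type*} [MeasurableSpace Ω]
    (μ : Measure Ω) [IsProbabilityMeasure μ] (E F : Ω → ℝ)
    (hE : Measurable E) (hF : Measurable F) (hindep : IndepFun E F μ)
    (hElaw : Measure.map E μ = expMeasure 1)
    (hFlaw : Measure.map F μ = expMeasure 1) :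
    Filter.Tendsto
      (fun t : ℝ => (μ {ω | E ω * F ω < t}).toReal / (t * Real.log (1 / t)))
      (nhdsWithin (0 : ℝ) (Set.Ioi 0)) (nhds 1) := by
  have hlaw : ∀ t, 0 ≤ t →
      (μ {ω | E ω * F ω < t}).toReal = ∫ x in Ioi 0, outageIntegrand t x := fun t ht => by
    rw [measure_mul_lt_eq_prod hE hF hindep, hElaw, hFlaw, expMeasure_prod_mul_lt ht,
      ENNReal.toReal_ofReal (integral_outageIntegrand_nonneg ht)]
  refine tendsto_div_mul_log_one_div_of_isBigO (IsBigO.of_bound 2 ?_)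
  filter_upwards [Ioo_mem_nhdsGT one_pos] with t ht
  rw [hlaw t ht.1.le, norm_eq_abs, id, norm_of_nonneg ht.1.le]
  exact abs_integral_outageIntegrand_sub_le ht.1 ht.2.le
end

section
/- Let E and F be independent exponentially distributed random variables, each with mean 1. Then lim_{t → 0⁺} ln( Pr[ E·F < t ] ) / ln t = 1. Consequently, for independent exponential transmit power P (mean λ_p) and Rayleigh channel gain Γ (exponential, mean λ_γ) with average SNR γ̄ = λ_p·λ_γ and fixed threshold C > 0, the diversity order d = − lim_{γ̄→∞} log( Pr[PΓ < C] ) / log(γ̄) equals 1, the same as for constant transmit power over a Rayleigh fading channel. -/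
/-!
The lower bound `Pr[EF < t] ≥ Pr[0 < E ≤ t/2] · Pr[0 < F ≤ 1] ≥ t/8` is elementary. For the
upper bound, Markov's inequality for `(EF)^(-s)` together with independence gives
`Pr[EF < t] ≤ t^s (𝔼 E^(-s))²`, and `𝔼 E^(-s) = Γ(1 - s)` is finite for every `s < 1`.
Hence `Pr[EF < t] = t^(1 + o(1))` as `t → 0⁺`, which is the first limit; the second follows by
substituting `t = C/γ̄`, as `log (C/γ̄) / log γ̄ → -1`.
-/

open MeasureTheory ProbabilityTheory Real Set Filter Topology


theorem half_le_one_sub_exp_neg {x : ℝ} (h0 : 0 ≤ x) (h1 : x ≤ 1) : x / 2 ≤ 1 - exp (-x) := by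
  have hinv : exp (-x) * exp x = 1 := by rw [← exp_add, neg_add_cancel, exp_zero]
  nlinarith [add_one_le_exp x, exp_pos (-x)]

theorem tendsto_log_mul_rpow_div_log {K : ℝ} (hK : 0 < K) (β : ℝ) :
    Tendsto (fun t => log (K * t ^ β) / log t) (𝓝[>] 0) (𝓝 β) := by
  have hsmall : Tendsto (fun t => log K / log t) (𝓝[>] 0) (𝓝 0) :=
    tendsto_const_nhds.div_atBot tendsto_log_nhdsGT_zero
  have hlog : ∀ᶠ t in 𝓝[>] (0 : ℝ), log t < 0 :=
    tendsto_log_nhdsGT_zero.eventually (eventually_lt_atBot 0)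
  have hsum : Tendsto (fun t => β + log K / log t) (𝓝[>] 0) (𝓝 β) := by
    simpa using tendsto_const_nhds.add hsmall
  refine hsum.congr' ?_
  filter_upwards [hlog, self_mem_nhdsWithin] with t ht ht0
  rw [log_mul hK.ne' (rpow_pos_of_pos ht0 β).ne', log_rpow ht0, add_div,
    mul_div_cancel_right₀ _ ht.ne, add_comm]

theorem log_div_log_le_log_div_log {t u v : ℝ} (ht : t ∈ Ioo 0 1) (hu : 0 < u) (huv : u ≤ v) :
    log v / log t ≤ log u / log t :=
  div_le_div_of_nonpos_of_le (log_neg ht.1 ht.2).le (log_le_log hu huv)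

theorem tendsto_log_div_log_of_rpow_bounds {f : ℝ → ℝ} {α : ℝ}
    (hlow : ∃ c > 0, ∀ᶠ t in 𝓝[>] 0, c * t ^ α ≤ f t)
    (hup : ∀ᶠ s in 𝓝[<] α, ∃ C, ∀ᶠ t in 𝓝[>] 0, f t ≤ C * t ^ s) :
    Tendsto (fun t => log (f t) / log t) (𝓝[>] 0) (𝓝 α) := by
  obtain ⟨c, hc, hcf⟩ := hlow
  have hunit : ∀ᶠ t in 𝓝[>] (0 : ℝ), t ∈ Ioo 0 1 := Ioo_mem_nhdsGT one_pos
  refine tendsto_order.2 ⟨fun a ha => ?_, fun b hb => ?_⟩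
  · obtain ⟨s, ⟨C, hCf⟩, has, -⟩ := (hup.and (Ioo_mem_nhdsLT ha)).exists
    obtain ⟨t, hct, hCt, ht⟩ := (hcf.and (hCf.and hunit)).exists
    have hC : 0 < C := pos_of_mul_pos_left
      ((mul_pos hc (rpow_pos_of_pos ht.1 α)).trans_le (hct.trans hCt)) (rpow_nonneg ht.1.le s)
    filter_upwards [(tendsto_log_mul_rpow_div_log hC s).eventually (lt_mem_nhds has), hcf, hCf,
      hunit] with t hat hct hCt ht
    exact hat.trans_le (log_div_log_le_log_div_log ht
      ((mul_pos hc (rpow_pos_of_pos ht.1 α)).trans_le hct) hCt)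
  · filter_upwards [(tendsto_log_mul_rpow_div_log hc α).eventually (gt_mem_nhds hb), hcf, hunit]
      with t hbt hct ht
    exact (log_div_log_le_log_div_log ht (mul_pos hc (rpow_pos_of_pos ht.1 α)) hct).trans_lt hbt

theorem tendsto_neg_log_comp_const_div_div_log {f : ℝ → ℝ} {α : ℝ}
    (hf : Tendsto (fun t => log (f t) / log t) (𝓝[>] 0) (𝓝 α)) {C : ℝ} (hC : 0 < C) :
    Tendsto (fun γ => -(log (f (C / γ)) / log γ)) atTop (𝓝 α) := by
  have hCγ : Tendsto (fun γ => C / γ) atTop (𝓝[>] 0) :=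
    tendsto_nhdsWithin_iff.2 ⟨tendsto_id.const_div_atTop C,
      (eventually_gt_atTop 0).mono fun γ hγ => div_pos hC hγ⟩
  have hscale : Tendsto (fun γ => 1 - log C / log γ) atTop (𝓝 1) := by
    simpa using tendsto_const_nhds.sub (tendsto_log_atTop.const_div_atTop (log C))
  have hprod := (hf.comp hCγ).mul hscale
  rw [mul_one] at hprod
  refine hprod.congr' ?_
  filter_upwards [eventually_gt_atTop (max 1 C)] with γ hγ
  have hγ1 : 1 < γ := (le_max_left _ _).trans_lt hγ
  have hCγ1 : C / γ < 1 := (div_lt_one (by linarith)).2 ((le_max_right _ _).trans_lt hγ)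
  have hlogCγ : log (C / γ) ≠ 0 := (log_neg (by positivity) hCγ1).ne
  have hlogγ : log γ ≠ 0 := (log_pos hγ1).ne'
  simp only [Function.comp_apply]
  rw [log_div hC.ne' (by linarith)] at hlogCγ ⊢
  field_simp
  ring

/-- Since `0 ^ (-s) = ⊤` in `ℝ≥0∞`, no sign conditions on `x` and `y` are needed. -/
theorem ofReal_rpow_neg_le_mul_of_mul_lt {x y t s : ℝ} (hs : 0 < s) (hxy : x * y < t) :
    ENNReal.ofReal t ^ (-s) ≤ ENNReal.ofReal x ^ (-s) * ENNReal.ofReal y ^ (-s) := by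
  have hne : ∀ z : ℝ, ENNReal.ofReal z ^ (-s) ≠ 0 := fun z => by
    simp [ENNReal.rpow_eq_zero_iff, hs.le]
  have htop : ENNReal.ofReal 0 ^ (-s) = ⊤ := by
    rw [ENNReal.ofReal_zero, ENNReal.zero_rpow_of_neg (neg_neg_of_pos hs)]
  rcases le_or_gt x 0 with hx | hx
  · rw [ENNReal.ofReal_of_nonpos hx, ← ENNReal.ofReal_zero, htop, ENNReal.top_mul (hne y)]
    exact le_top
  rcases le_or_gt y 0 with hy | hy
  · rw [ENNReal.ofReal_of_nonpos hy, ← ENNReal.ofReal_zero, htop, ENNReal.mul_top (hne x)]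
    exact le_top
  have hxy0 : 0 < x * y := mul_pos hx hy
  rw [ENNReal.ofReal_rpow_of_pos (hxy0.trans hxy), ENNReal.ofReal_rpow_of_pos hx,
    ENNReal.ofReal_rpow_of_pos hy, ← ENNReal.ofReal_mul (by positivity),
    ← mul_rpow hx.le hy.le]
  exact ENNReal.ofReal_le_ofReal (rpow_le_rpow_of_nonpos hxy0 hxy.le (by linarith))

theorem expMeasure_Ioc_zero {r a : ℝ} (hr : 0 < r) (ha : 0 ≤ a) :
    expMeasure r (Ioc 0 a) = ENNReal.ofReal (1 - exp (-(r * a))) := by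
  have := isProbabilityMeasure_expMeasure hr
  rw [← measure_cdf (expMeasure r), StieltjesFunction.measure_Ioc, cdf_expMeasure_eq hr,
    cdf_expMeasure_eq hr]
  simp [ha]

theorem lintegral_ofReal_rpow_neg_expMeasure_lt_top {s : ℝ} (hs : s < 1) :
    ∫⁻ x, ENNReal.ofReal x ^ (-s) ∂expMeasure 1 < ⊤ := by
  have hsupp : Function.support (fun x => exponentialPDF 1 x * ENNReal.ofReal x ^ (-s)) ⊆ Ici 0 :=
    fun x hx => mem_Ici.2 <| not_lt.1 fun hx0 => hx (by simp [exponentialPDF_of_neg hx0])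
  change ∫⁻ x, _ ∂(volume.withDensity (exponentialPDF 1)) < ⊤
  rw [lintegral_withDensity_eq_lintegral_mul (f := exponentialPDF 1) _
    (measurable_exponentialPDFReal 1).ennreal_ofReal
    (ENNReal.measurable_ofReal.pow_const _)]
  simp only [Pi.mul_apply]
  rw [← setLIntegral_eq_of_support_subset hsupp,
    setLIntegral_congr Ioi_ae_eq_Ici.symm,
    setLIntegral_congr_fun measurableSet_Ioi
      (g := fun x => ENNReal.ofReal (exp (-x) * x ^ ((1 - s) - 1))) fun x hx => ?_]
  · exact (GammaIntegral_convergent (by linarith)).setLIntegral_lt_top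
  · rw [exponentialPDF_of_nonneg (le_of_lt hx), ENNReal.ofReal_rpow_of_pos hx,
      ← ENNReal.ofReal_mul (by positivity)]
    ring_nf

section Product

variable {Ω : Type*} [MeasurableSpace Ω] {μ : Measure Ω} {E F : Ω → ℝ}

theorem measure_mul_lt_le_rpow_mul_lintegral (hE : Measurable E) (hF : Measurable F)
    (hindep : IndepFun E F μ) {s t : ℝ} (hs : 0 < s) (ht : 0 < t) :
    μ {ω | E ω * F ω < t} ≤ ENNReal.ofReal t ^ s *
      ((∫⁻ x, ENNReal.ofReal x ^ (-s) ∂μ.map E) * ∫⁻ x, ENNReal.ofReal x ^ (-s) ∂μ.map F) := by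
  set g : ℝ → ENNReal := fun x => ENNReal.ofReal x ^ (-s)
  have hg : Measurable g := ENNReal.measurable_ofReal.pow_const _
  have hε0 : ENNReal.ofReal t ^ (-s) ≠ 0 := by simp [ENNReal.rpow_eq_zero_iff, hs.le]
  have hεtop : ENNReal.ofReal t ^ (-s) ≠ ⊤ := by simp [ENNReal.rpow_eq_top_iff, hs, ht]
  have hprod : ∫⁻ ω, g (E ω) * g (F ω) ∂μ = (∫⁻ ω, g (E ω) ∂μ) * ∫⁻ ω, g (F ω) ∂μ :=
    lintegral_mul_eq_lintegral_mul_lintegral_of_indepFun'' (hg.comp hE).aemeasurable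
      (hg.comp hF).aemeasurable (hindep.comp hg hg)
  calc μ {ω | E ω * F ω < t}
      ≤ μ {ω | ENNReal.ofReal t ^ (-s) ≤ g (E ω) * g (F ω)} :=
        measure_mono fun ω hω => ofReal_rpow_neg_le_mul_of_mul_lt hs hω
    _ ≤ (∫⁻ ω, g (E ω) * g (F ω) ∂μ) / ENNReal.ofReal t ^ (-s) :=
        meas_ge_le_lintegral_div ((hg.comp hE).mul (hg.comp hF)).aemeasurable hε0 hεtop
    _ = _ := by
        rw [hprod, lintegral_map hg hE, lintegral_map hg hF,
          div_eq_mul_inv, ENNReal.rpow_neg, inv_inv, mul_comm]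

theorem measure_Ioc_mul_measure_Ioc_le (hE : Measurable E) (hF : Measurable F)
    (hindep : IndepFun E F μ) {a b t : ℝ} (hab : a * b < t) :
    μ.map E (Ioc 0 a) * μ.map F (Ioc 0 b) ≤ μ {ω | E ω * F ω < t} := by
  rw [Measure.map_apply hE measurableSet_Ioc, Measure.map_apply hF measurableSet_Ioc,
    ← hindep.measure_inter_preimage_eq_mul _ _ measurableSet_Ioc measurableSet_Ioc]
  refine measure_mono fun ω ⟨⟨hE0, hEa⟩, hF0, hFb⟩ => ?_
  exact (mul_le_mul hEa hFb hF0.le (hE0.le.trans hEa)).trans_lt hab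

theorem le_toReal_measure_mul_lt [IsFiniteMeasure μ] (hE : Measurable E) (hF : Measurable F)
    (hindep : IndepFun E F μ) (hElaw : μ.map E = expMeasure 1) (hFlaw : μ.map F = expMeasure 1)
    {t : ℝ} (ht0 : 0 < t) (ht2 : t ≤ 2) :
    t / 8 ≤ (μ {ω | E ω * F ω < t}).toReal := by
  have hbound := measure_Ioc_mul_measure_Ioc_le hE hF hindep (a := t / 2) (b := 1) (t := t)
    (by linarith)
  have hEt := half_le_one_sub_exp_neg (x := t / 2) (by positivity) (by linarith)
  have hF1 := half_le_one_sub_exp_neg (x := 1) zero_le_one le_rfl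
  rw [hElaw, hFlaw, expMeasure_Ioc_zero one_pos (by positivity),
    expMeasure_Ioc_zero one_pos zero_le_one, one_mul, one_mul,
    ← ENNReal.ofReal_mul (by linarith)] at hbound
  refine le_trans ?_ (ENNReal.toReal_mono (measure_ne_top _ _) hbound)
  rw [ENNReal.toReal_ofReal (by nlinarith)]
  nlinarith

theorem exists_toReal_measure_mul_lt_le_rpow (hE : Measurable E) (hF : Measurable F)
    (hindep : IndepFun E F μ) (hElaw : μ.map E = expMeasure 1) (hFlaw : μ.map F = expMeasure 1)
    {s : ℝ} (hs : s ∈ Ioo 0 1) :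
    ∃ C, ∀ t > 0, (μ {ω | E ω * F ω < t}).toReal ≤ C * t ^ s := by
  set K := ∫⁻ x, ENNReal.ofReal x ^ (-s) ∂expMeasure 1
  have hK : K ≠ ⊤ := (lintegral_ofReal_rpow_neg_expMeasure_lt_top hs.2).ne
  refine ⟨(K * K).toReal, fun t ht => ?_⟩
  have hbound := measure_mul_lt_le_rpow_mul_lintegral hE hF hindep hs.1 ht
  rw [hElaw, hFlaw] at hbound
  calc (μ {ω | E ω * F ω < t}).toReal ≤ (ENNReal.ofReal t ^ s * (K * K)).toReal :=
        ENNReal.toReal_mono (by finiteness) hbound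
    _ = (K * K).toReal * t ^ s := by
        rw [ENNReal.toReal_mul, ← ENNReal.toReal_rpow, ENNReal.toReal_ofReal ht.le, mul_comm]

end Product

/-- Let `E` and `F` be independent exponentially distributed random variables,
each with mean 1.  Then `ln(Pr[E·F < t]) / ln t → 1` as `t → 0⁺`.  Consequently,
for independent exponential transmit power `P` (mean `λ_p`) and Rayleigh channel
gain `Γ` (exponential, mean `λ_γ`) with average SNR `γ̄ = λ_p·λ_γ` and fixed
threshold `C > 0`, the scaling identity `Pr[PΓ < C] = Pr[EF < C/γ̄]` shows that
the diversity order `d = − lim_{γ̄→∞} log(Pr[PΓ < C])/log(γ̄)` equals 1, the same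
as for constant transmit power over a Rayleigh fading channel. -/
theorem diversity_order_one {Ω : Type*} [MeasurableSpace Ω]
    (μ : Measure Ω) [IsProbabilityMeasure μ] (E F : Ω → ℝ)
    (hE : Measurable E) (hF : Measurable F) (hindep : IndepFun E F μ)
    (hElaw : Measure.map E μ = expMeasure 1)
    (hFlaw : Measure.map F μ = expMeasure 1) :
    Filter.Tendsto
      (fun t : ℝ => Real.log (μ {ω | E ω * F ω < t}).toReal / Real.log t)
      (nhdsWithin (0 : ℝ) (Set.Ioi 0)) (nhds 1) ∧
    ∀ C : ℝ, 0 < C →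
      Filter.Tendsto
        (fun γbar : ℝ =>
          -(Real.log (μ {ω | E ω * F ω < C / γbar}).toReal / Real.log γbar))
        Filter.atTop (nhds 1) := by
  have hlow : ∀ᶠ t in 𝓝[>] 0, 1 / 8 * t ^ (1 : ℝ) ≤ (μ {ω | E ω * F ω < t}).toReal := by
    filter_upwards [Ioc_mem_nhdsGT two_pos] with t ht
    rw [rpow_one, one_div_mul_eq_div]
    exact le_toReal_measure_mul_lt hE hF hindep hElaw hFlaw ht.1 ht.2
  have hup : ∀ᶠ s in 𝓝[<] (1 : ℝ),
      ∃ C, ∀ᶠ t in 𝓝[>] 0, (μ {ω | E ω * F ω < t}).toReal ≤ C * t ^ s :=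
    Filter.mem_of_superset (Ioo_mem_nhdsLT one_pos) fun s hs =>
      (exists_toReal_measure_mul_lt_le_rpow hE hF hindep hElaw hFlaw hs).imp
        fun C hC => eventually_mem_nhdsWithin.mono hC
  have hdiv := tendsto_log_div_log_of_rpow_bounds ⟨1 / 8, by norm_num, hlow⟩ hup
  exact ⟨hdiv, fun C hC => tendsto_neg_log_comp_const_div_div_log hdiv hC⟩
end
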